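/- arXiv:1306.5662 — 6 statements merged into one kernel-verified Lean document; each statement's English description precedes it below -/
import Mathlib

section
/- The Dwork operator commutes with the involution x ↦ 1 - x on rationals in (0,1): for a prime p and a p-integral rational x with 0 < x < 1, δ_p(1 - x) = 1 - δ_p(x). -/
/-- If `q ≠ 0` and the denominator of `q` is not divisible by the prime `p`,
then the `p`-adic valuation of `q` is nonnegative. -/
lemma padicValRat_nonneg_of_not_dvd_den {p : ℕ} [Fact p.Prime] {q : ℚ}
    (h : ¬ (p : ℕ) ∣ q.den) : 0 ≤ padicValRat p q := by
  rw [padicValRat_def, padicValNat.eq_zero_of_not_dvd h]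
  simp [padicValInt]

/-- The Dwork operator commutes with `x ↦ 1 - x` on `p`-integral rationals in `(0,1)`:
`δ_p(1 - x) = 1 - δ_p(x)`, where `δ_p(x) = (x + x₀)/p` and `δ_p(1-x) = (1 - x + y₀)/p`
with `x₀, y₀ ∈ {0,…,p-1}` the unique integers making the results `p`-integral, and
assuming `δ_p(x) ∈ (0,1)`. -/
theorem dwork_one_sub (p : ℕ) (hp : p.Prime) (x : ℚ) (hx0 : 0 < x) (hx1 : x < 1)
    (hx : ¬ (p : ℕ) ∣ x.den)
    (x₀ y₀ : ℤ) (hx₀0 : 0 ≤ x₀) (hx₀1 : x₀ ≤ (p : ℤ) - 1)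
    (hy₀0 : 0 ≤ y₀) (hy₀1 : y₀ ≤ (p : ℤ) - 1)
    (hxint : ¬ (p : ℕ) ∣ ((x + (x₀ : ℚ)) / p).den)
    (hyint : ¬ (p : ℕ) ∣ ((1 - x + (y₀ : ℚ)) / p).den)
    (hδ0 : 0 < (x + (x₀ : ℚ)) / p) (hδ1 : (x + (x₀ : ℚ)) / p < 1) :
    (1 - x + (y₀ : ℚ)) / p = 1 - (x + (x₀ : ℚ)) / p := by
  haveI : Fact p.Prime := ⟨hp⟩
  have hp0 : (0:ℚ) < p := by exact_mod_cast hp.pos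
  have hpq : (p:ℚ) ≠ 0 := ne_of_gt hp0
  -- the two numerators are positive
  have hX : (0:ℚ) < x + (x₀:ℚ) := by
    have : (0:ℚ) ≤ (x₀:ℚ) := by exact_mod_cast hx₀0
    linarith
  have hY : (0:ℚ) < 1 - x + (y₀:ℚ) := by
    have : (0:ℚ) ≤ (y₀:ℚ) := by exact_mod_cast hy₀0
    linarith
  -- valuations of numerators are ≥ 1
  have key : ∀ q : ℚ, q ≠ 0 → ¬ (p : ℕ) ∣ (q / p).den → 1 ≤ padicValRat p q := by
    intro q hq hqd
    have h1 : 0 ≤ padicValRat p (q / p) := padicValRat_nonneg_of_not_dvd_den hqd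
    rw [padicValRat.div hq hpq, padicValRat.self hp.one_lt] at h1
    omega
  have hvX := key _ (ne_of_gt hX) hxint
  have hvY := key _ (ne_of_gt hY) hyint
  -- the sum has valuation ≥ 1
  have hsum : (x + (x₀:ℚ)) + (1 - x + (y₀:ℚ)) = ((1 + x₀ + y₀ : ℤ) : ℚ) := by
    push_cast; ring
  have hZpos : (0:ℤ) < 1 + x₀ + y₀ := by omega
  have hZne : ((1 + x₀ + y₀ : ℤ) : ℚ) ≠ 0 := by
    exact_mod_cast hZpos.ne'
  have hmin : 1 ≤ padicValRat p ((1 + x₀ + y₀ : ℤ) : ℚ) := by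
    rw [← hsum]
    calc (1:ℤ) ≤ min (padicValRat p (x + (x₀:ℚ))) (padicValRat p (1 - x + (y₀:ℚ))) := by
          omega
      _ ≤ _ := padicValRat.min_le_padicValRat_add (by rw [hsum]; exact hZne)
  -- hence p divides 1 + x₀ + y₀
  have hdvd : (p:ℤ) ∣ (1 + x₀ + y₀) := by
    have : (p:ℤ) ^ 1 ∣ (1 + x₀ + y₀) := by
      rw [padicValInt_dvd_iff]
      right
      have := padicValRat.of_int (p := p) (z := 1 + x₀ + y₀)
      omega
    simpa using this
  -- bounds force 1 + x₀ + y₀ = p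
  have hpe : 1 + x₀ + y₀ = (p:ℤ) := by
    have hple : (1:ℤ) ≤ p := by exact_mod_cast hp.one_lt.le
    rcases hdvd with ⟨k, hk⟩
    have hk1 : k = 1 := by nlinarith
    rw [hk1, mul_one] at hk
    omega
  -- conclude
  have hy : (y₀:ℚ) = (p:ℚ) - 1 - (x₀:ℚ) := by
    have : (y₀:ℤ) = (p:ℤ) - 1 - x₀ := by omega
    exact_mod_cast this
  rw [hy]
  field_simp
  ring
end

section
/- A formal power series f ∈ 1 + z·ℚ_p[[z]] has all coefficients in ℤ_p if and only if f(z^p)/f(z)^p ∈ 1 + p·z·ℤ_p[[z]]. -/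
/-!
Write `g = f(z^p) / f(z)^p`. If `f` is integral, then `f(z)^p ≡ f(z^p) mod p` (Frobenius on
`𝔽_p[[z]]`) and `f^p` is a unit of `ℤ_p[[z]]`, so `g - 1 = (f(z^p) - f^p) / f^p` lies in
`p ℤ_p[[z]]`.
Conversely, if `c₀, …, c_{n-1}` are integral, let `T` be the truncation of `f` below degree `n`.
Since `f ≡ T + c_n z^n mod z^(n+1)`, comparing the coefficients of `z^n` in `f(z^p) = g f^p` gives
`p c_n = [z^n] (T(z^p) - T^p) - [z^n] ((g - 1) T^p)`, and both terms have norm at most `|p|`.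
-/

open PowerSeries

namespace PowerSeries

theorem coeff_mul_pow_of_X_pow_dvd_sub {R : Type*} [CommRing R] {n : ℕ} (hn : 0 < n)
    {f T : R⟦X⟧} (hfT : X ^ n ∣ f - T) (g : R⟦X⟧) (m : ℕ) :
    coeff n (g * f ^ m) = coeff n (g * T ^ m)
      + m * constantCoeff g * constantCoeff T ^ (m - 1) * (coeff n f - coeff n T) := by
  obtain ⟨h, hh⟩ := hfT
  obtain rfl : f = T + X ^ n * h := by rw [← hh, add_sub_cancel]
  have hsq : X ^ (n + 1) ∣
      g * ((T + X ^ n * h) ^ m - T ^ (m - 1) * (X ^ n * h) * (m : R⟦X⟧) - T ^ m) := by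
    refine dvd_mul_of_dvd_right (dvd_trans ?_ (sq_dvd_add_pow_sub_sub _ T m)) g
    rw [mul_pow, ← pow_mul]
    exact dvd_mul_of_dvd_left (pow_dvd_pow X (by omega)) _
  have hzero := X_pow_dvd_iff.1 hsq n n.lt_succ_self
  have hlin : g * (T ^ (m - 1) * (X ^ n * h) * (m : R⟦X⟧))
      = X ^ n * ((m : R⟦X⟧) * g * T ^ (m - 1) * h) := by ring
  have hcoeff (φ : R⟦X⟧) : coeff n (X ^ n * φ) = constantCoeff φ := by
    simpa using coeff_X_pow_mul φ n 0
  rw [mul_sub, mul_sub, map_sub, map_sub, hlin, hcoeff] at hzero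
  rw [map_add, add_sub_cancel_left, hcoeff]
  simp only [map_mul, map_pow, map_natCast] at hzero
  linear_combination hzero

theorem norm_coeff_mul_le {R : Type*} [NormedRing R] [IsUltrametricDist R] {f g : R⟦X⟧}
    {a b : ℝ} (hf : ∀ i, ‖coeff i f‖ ≤ a) (hg : ∀ j, ‖coeff j g‖ ≤ b) (n : ℕ) :
    ‖coeff n (f * g)‖ ≤ a * b := by
  have ha : 0 ≤ a := (norm_nonneg _).trans (hf 0)
  rw [coeff_mul]
  refine IsUltrametricDist.norm_sum_le_of_forall_le_of_nonneg
    (mul_nonneg ha ((norm_nonneg _).trans (hg 0))) fun x _ => ?_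
  exact (norm_mul_le _ _).trans (mul_le_mul (hf _) (hg _) (norm_nonneg _) ha)

theorem pow_card_eq_expand {K : Type*} [Field K] [Fintype K] (φ : K⟦X⟧) :
    φ ^ Fintype.card K = expand (Fintype.card K) Fintype.card_ne_zero φ := by
  ext n
  have htrunc := congrArg (Polynomial.coeff · n) (trunc_trunc_pow φ (n + 1) (Fintype.card K))
  simp only [coeff_trunc, n.lt_succ_self, if_true, ← Polynomial.coe_pow,
    ← FiniteField.expand_card, Polynomial.coeff_coe] at htrunc
  rw [← htrunc, Polynomial.coeff_expand Fintype.card_pos, coeff_expand, coeff_trunc,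
    if_pos (Nat.lt_succ_of_le (Nat.div_le_self n _))]

end PowerSeries

namespace PadicInt

variable {p : ℕ} [hp : Fact p.Prime]

theorem norm_coe_le_norm_p_of_toZMod_eq_zero {x : ℤ_[p]} (hx : toZMod x = 0) :
    ‖(x : ℚ_[p])‖ ≤ ‖(p : ℚ_[p])‖ := by
  obtain ⟨y, rfl⟩ : (p : ℤ_[p]) ∣ x := by
    rwa [← Ideal.mem_span_singleton, ← maximalIdeal_eq_span_p, ← ker_toZMod]
  rw [coe_mul, norm_mul, coe_natCast]
  exact mul_le_of_le_one_right (norm_nonneg _) (norm_le_one y)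

theorem exists_map_coe_eq_of_norm_coeff_le_one {f : ℚ_[p]⟦X⟧}
    (hf : ∀ i, ‖coeff i f‖ ≤ 1) :
    ∃ F : ℤ_[p]⟦X⟧, map Coe.ringHom F = f := by
  refine ⟨mk fun i => ⟨coeff i f, hf i⟩, ?_⟩
  ext i
  rw [coeff_map]
  exact congrArg Subtype.val (coeff_mk (R := ℤ_[p]) i _)

theorem norm_coeff_pow_le_one {f : ℚ_[p]⟦X⟧} (hf : ∀ i, ‖coeff i f‖ ≤ 1) (m n : ℕ) :
    ‖coeff n (f ^ m)‖ ≤ 1 := by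
  obtain ⟨F, rfl⟩ := exists_map_coe_eq_of_norm_coeff_le_one hf
  rw [← map_pow, coeff_map]
  exact norm_le_one _

theorem norm_coeff_inv_le_one {f : ℚ_[p]⟦X⟧} (hf : ∀ i, ‖coeff i f‖ ≤ 1)
    (hf0 : ‖constantCoeff f‖ = 1) (n : ℕ) : ‖coeff n f⁻¹‖ ≤ 1 := by
  obtain ⟨F, rfl⟩ := exists_map_coe_eq_of_norm_coeff_le_one hf
  have hne : constantCoeff (map Coe.ringHom F) ≠ 0 := norm_ne_zero_iff.1 (hf0 ▸ one_ne_zero)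
  rw [← coeff_zero_eq_constantCoeff_apply, coeff_map, coeff_zero_eq_constantCoeff_apply] at hf0
  have hunit : IsUnit (constantCoeff F) := isUnit_iff.2 hf0
  have hinv : (map Coe.ringHom F)⁻¹ = map Coe.ringHom (invOfUnit F hunit.unit) := by
    rw [inv_eq_iff_mul_eq_one hne, ← map_mul, invOfUnit_mul _ _ rfl, map_one]
  rw [hinv, coeff_map]
  exact norm_le_one _

theorem norm_coeff_expand_sub_pow_le {f : ℚ_[p]⟦X⟧} (hf : ∀ i, ‖coeff i f‖ ≤ 1)
    (n : ℕ) :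
    ‖coeff n (expand p hp.out.ne_zero f - f ^ p)‖ ≤ ‖(p : ℚ_[p])‖ := by
  obtain ⟨F, rfl⟩ := exists_map_coe_eq_of_norm_coeff_le_one hf
  rw [← map_expand, ← map_pow, ← map_sub, coeff_map]
  apply norm_coe_le_norm_p_of_toZMod_eq_zero
  have hfrob := pow_card_eq_expand (map (toZMod (p := p)) F)
  simp only [ZMod.card] at hfrob
  rw [← coeff_map, map_sub, map_pow, map_expand, hfrob, sub_self, map_zero]

theorem norm_coeff_expand_mul_inv_pow_sub_one_le {f : ℚ_[p]⟦X⟧}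
    (hf : ∀ i, ‖coeff i f‖ ≤ 1) (hf0 : constantCoeff f = 1) (n : ℕ) :
    ‖coeff n (expand p hp.out.ne_zero f * (f ^ p)⁻¹ - 1)‖ ≤ ‖(p : ℚ_[p])‖ := by
  have hpow0 : constantCoeff (f ^ p) = 1 := by rw [map_pow, hf0, one_pow]
  rw [← mul_one ‖(p : ℚ_[p])‖, ← PowerSeries.mul_inv_cancel (f ^ p) (by simp [hpow0]),
    ← sub_mul]
  exact norm_coeff_mul_le (norm_coeff_expand_sub_pow_le hf)
    (norm_coeff_inv_le_one (norm_coeff_pow_le_one hf p) (by simp [hpow0])) n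

theorem norm_coeff_le_one_of_forall_lt {f g : ℚ_[p]⟦X⟧} (hf0 : constantCoeff f = 1)
    (hg0 : constantCoeff g = 1) (hg : ∀ i, 1 ≤ i → ‖coeff i g‖ ≤ ‖(p : ℚ_[p])‖)
    (hfg : expand p hp.out.ne_zero f = g * f ^ p) {n : ℕ} (hn : 0 < n)
    (hlt : ∀ k < n, ‖coeff k f‖ ≤ 1) : ‖coeff n f‖ ≤ 1 := by
  set T : ℚ_[p]⟦X⟧ := ↑(trunc n f)
  have hTcoeff (i : ℕ) : coeff i T = if i < n then coeff i f else 0 := by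
    rw [Polynomial.coeff_coe, coeff_trunc]
  have hT (i : ℕ) : ‖coeff i T‖ ≤ 1 := by
    rw [hTcoeff]
    split_ifs with hi
    exacts [hlt i hi, by simp]
  have hT0 : constantCoeff T = 1 := by
    rw [← coeff_zero_eq_constantCoeff_apply, hTcoeff, if_pos hn,
      coeff_zero_eq_constantCoeff_apply, hf0]
  have hdvd : X ^ n ∣ f - T :=
    X_pow_dvd_iff.2 fun i hi => by rw [map_sub, hTcoeff, if_pos hi, sub_self]
  have hexpand :
      coeff n (expand p hp.out.ne_zero f) = coeff n (expand p hp.out.ne_zero T) := by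
    rw [coeff_expand, coeff_expand, hTcoeff, if_pos (Nat.div_lt_self hn hp.out.one_lt)]
  have hg1 (i : ℕ) : ‖coeff i (g - 1)‖ ≤ ‖(p : ℚ_[p])‖ := by
    rcases i.eq_zero_or_pos with rfl | hi
    · simp [hg0]
    · rw [map_sub, coeff_one, if_neg hi.ne', sub_zero]
      exact hg i hi
  have hkey : (p : ℚ_[p]) * coeff n f
      = coeff n (expand p hp.out.ne_zero T - T ^ p) - coeff n ((g - 1) * T ^ p) := by
    have htaylor := coeff_mul_pow_of_X_pow_dvd_sub hn hdvd g p
    rw [← hfg, hexpand, hg0, hT0, hTcoeff, if_neg n.lt_irrefl] at htaylor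
    rw [sub_mul, one_mul, map_sub, map_sub, htaylor]
    ring
  have hbound : ‖(p : ℚ_[p])‖ * ‖coeff n f‖ ≤ ‖(p : ℚ_[p])‖ * 1 := by
    rw [← norm_mul, hkey, mul_one, sub_eq_add_neg]
    refine (IsUltrametricDist.norm_add_le_max _ _).trans (max_le ?_ ?_)
    · exact norm_coeff_expand_sub_pow_le hT n
    · rw [norm_neg, ← mul_one ‖(p : ℚ_[p])‖]
      exact norm_coeff_mul_le hg1 (norm_coeff_pow_le_one hT p) n
  exact le_of_mul_le_mul_left hbound (norm_pos_iff.2 (Nat.cast_ne_zero.2 hp.out.ne_zero))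

theorem norm_coeff_le_one_of_expand_eq_mul_pow {f g : ℚ_[p]⟦X⟧} (hf0 : constantCoeff f = 1)
    (hg0 : constantCoeff g = 1) (hg : ∀ i, 1 ≤ i → ‖coeff i g‖ ≤ ‖(p : ℚ_[p])‖)
    (hfg : expand p hp.out.ne_zero f = g * f ^ p) (n : ℕ) : ‖coeff n f‖ ≤ 1 := by
  induction n using Nat.strong_induction_on with
  | _ n ih =>
    rcases n.eq_zero_or_pos with rfl | hn
    · simp [hf0]
    · exact norm_coeff_le_one_of_forall_lt hf0 hg0 hg hfg hn ih

end PadicInt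

/-- Dwork's (Dieudonné's) lemma: a formal power series `f ∈ 1 + z·ℚ_p[[z]]` has all
coefficients in `ℤ_p` iff `f(z^p)/f(z)^p ∈ 1 + p·z·ℤ_p[[z]]`. Here `fp` denotes the
series `f(z^p)`. -/
theorem dwork_lemma (p : ℕ) [Fact p.Prime] (f : PowerSeries ℚ_[p])
    (hf1 : PowerSeries.constantCoeff f = 1)
    (fp : PowerSeries ℚ_[p])
    (hfp : ∀ n : ℕ, PowerSeries.coeff n fp =
      if p ∣ n then PowerSeries.coeff (n / p) f else 0) :
    (∀ n : ℕ, ‖PowerSeries.coeff n f‖ ≤ 1) ↔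
      (PowerSeries.constantCoeff (fp * (f ^ p)⁻¹) = 1 ∧
        ∀ n : ℕ, 1 ≤ n →
          ‖PowerSeries.coeff n (fp * (f ^ p)⁻¹)‖ ≤ ‖(p : ℚ_[p])‖) := by
  have hp : p.Prime := Fact.out
  obtain rfl : fp = expand p hp.ne_zero f := ext fun n => by rw [hfp, coeff_expand]
  have hg0 : constantCoeff (expand p hp.ne_zero f * (f ^ p)⁻¹) = 1 := by simp [hf1]
  constructor
  · intro hf
    refine ⟨hg0, fun n hn => ?_⟩
    have hbound := PadicInt.norm_coeff_expand_mul_inv_pow_sub_one_le hf hf1 n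
    rwa [map_sub, coeff_one, if_neg (by omega), sub_zero] at hbound
  · rintro ⟨-, hg⟩
    refine PadicInt.norm_coeff_le_one_of_expand_eq_mul_pow hf1 hg0 hg ?_
    rw [mul_assoc, PowerSeries.inv_mul_cancel _ (by simp [hf1]), mul_one]
end

section
/- If f ∈ z·ℚ_p[[z]] satisfies f(z^p) - p·f(z) ∈ p·z·ℤ_p[[z]], then z·exp(f(z)) ∈ z·ℤ_p[[z]], i.e., exp(f) has p-integral coefficients. -/
/-!
Write `E = exp f` and `h = f(z^p) - p f`. Since `exp` turns sums into products and commutes with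
`z ↦ z^p`, we get `E(z^p) = E^p · exp h`, and `exp h ∈ 1 + p z ℤ_p[[z]]` because `v_p(k!) < k`.
Dwork's argument then shows that the coefficients `e_n` of `E` are integral, by induction on `n`:
if `T` is the truncation of `E` below degree `n`, the coefficient of `z^n` in `E^p` is that of
`T^p` plus `p e_n`, and `T^p ≡ T(z^p) (mod p)` by Frobenius; comparing coefficients of `z^n` in
`E(z^p) = E^p · exp h` leaves `p e_n ≡ 0 (mod p)`.
-/

open PowerSeries Finset

namespace PowerSeries

section

variable {R : Type*} [CommRing R]

theorem coeff_subst_eq_sum (φ : R⟦X⟧) {f : R⟦X⟧} (hf : constantCoeff f = 0) (n : ℕ) :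
    coeff n (φ.subst f) = ∑ d ∈ range (n + 1), coeff d φ * coeff n (f ^ d) := by
  rw [coeff_subst' (HasSubst.of_constantCoeff_zero' hf)]
  refine finsum_eq_sum_of_support_subset _ fun d hd => ?_
  by_contra hdn
  have hlt : n < d := by simpa using hdn
  have hpow : X ^ d ∣ f ^ d := pow_dvd_pow_of_dvd (X_dvd_iff.mpr hf) d
  exact hd (by dsimp only; rw [X_pow_dvd_iff.mp hpow n hlt, smul_zero])

theorem coeff_mul_of_X_pow_dvd {S : Type*} [Semiring S] {φ : S⟦X⟧} {n : ℕ} (h : X ^ n ∣ φ)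
    (ψ : S⟦X⟧) :
    coeff n (φ * ψ) = coeff n φ * constantCoeff ψ := by
  obtain ⟨χ, rfl⟩ := h
  simp [mul_assoc, coeff_X_pow_mul']

theorem coeff_pow_eq_coeff_trunc_pow_add {E : R⟦X⟧} (hE : constantCoeff E = 1) {n : ℕ}
    (hn : n ≠ 0) (k : ℕ) :
    coeff n (E ^ k) = coeff n ((trunc n E : R⟦X⟧) ^ k) + k * coeff n E := by
  set T : R⟦X⟧ := ↑(trunc n E)
  have hdvd : X ^ n ∣ E - T := ⟨_, sub_eq_iff_eq_add.mpr (eq_X_pow_mul_shift_add_trunc n E)⟩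
  have hT : constantCoeff T = 1 := by
    rw [← coeff_zero_eq_constantCoeff_apply, Polynomial.coeff_coe, coeff_trunc,
      if_pos (Nat.pos_of_ne_zero hn), coeff_zero_eq_constantCoeff_apply, hE]
  have hdiff : E ^ k - T ^ k = (E - T) * ∑ i ∈ range k, E ^ i * T ^ (k - 1 - i) := by
    rw [mul_comm, geom_sum₂_mul]
  rw [← sub_eq_iff_eq_add', ← map_sub, hdiff, coeff_mul_of_X_pow_dvd hdvd, map_sub,
    Polynomial.coeff_coe, coeff_trunc, if_neg (lt_irrefl n), sub_zero]
  simp [hE, hT, mul_comm]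

end

section Ultrametric

variable {R : Type*} [SeminormedRing R] [IsUltrametricDist R]

theorem norm_coeff_mul_le_s9 {φ ψ : R⟦X⟧} {n : ℕ} {a b : ℝ} (hφ : ∀ i ≤ n, ‖coeff i φ‖ ≤ a)
    (hψ : ∀ j ≤ n, ‖coeff j ψ‖ ≤ b) : ‖coeff n (φ * ψ)‖ ≤ a * b := by
  have ha : 0 ≤ a := (norm_nonneg _).trans (hφ 0 n.zero_le)
  have hb : 0 ≤ b := (norm_nonneg _).trans (hψ 0 n.zero_le)
  rw [coeff_mul]
  refine IsUltrametricDist.norm_sum_le_of_forall_le_of_nonneg (mul_nonneg ha hb) fun ij hij => ?_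
  have hij' := mem_antidiagonal.mp hij
  exact (norm_mul_le _ _).trans
    (mul_le_mul (hφ _ (by omega)) (hψ _ (by omega)) (norm_nonneg _) ha)

theorem norm_coeff_pow_le [NormOneClass R] {φ : R⟦X⟧} {n : ℕ} {a : ℝ}
    (hφ : ∀ i ≤ n, ‖coeff i φ‖ ≤ a) (k : ℕ) {m : ℕ} (hm : m ≤ n) :
    ‖coeff m (φ ^ k)‖ ≤ a ^ k := by
  induction k generalizing m with
  | zero => rw [pow_zero, pow_zero, coeff_one]; split_ifs <;> simp
  | succ k ih =>
    rw [pow_succ, pow_succ]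
    exact norm_coeff_mul_le_s9 (fun i hi => ih (hi.trans hm)) (fun j hj => hφ j (hj.trans hm))

end Ultrametric

section Exp

variable {A : Type*} [CommRing A] [Algebra ℚ A]

theorem exp_subst_X_add_X :
    (exp A).subst (MvPowerSeries.X 0 + MvPowerSeries.X 1 : MvPowerSeries (Fin 2) A) =
      (exp A).subst (MvPowerSeries.X (0 : Fin 2)) *
        (exp A).subst (MvPowerSeries.X (1 : Fin 2)) := by
  ext e
  rw [coeff_subst_X_zero_add_X_one, coeff_subst_X_zero_subst_mul_X_one]
  simp only [coeff_exp, ← map_natCast (algebraMap ℚ A), ← map_mul]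
  congr 1
  field_simp
  rw [← Nat.add_choose_mul_factorial_mul_factorial (e 0) (e 1), Nat.choose_symm_add]
  push_cast
  ring

theorem exp_subst_add {f g : A⟦X⟧} (hf : constantCoeff f = 0) (hg : constantCoeff g = 0) :
    (exp A).subst (f + g) = (exp A).subst f * (exp A).subst g := by
  have hfg : MvPowerSeries.HasSubst ![f, g] :=
    MvPowerSeries.hasSubst_of_constantCoeff_zero (fun i => by fin_cases i <;> simpa)
  have key := congrArg (MvPowerSeries.subst ![f, g]) (exp_subst_X_add_X (A := A))
  simp only [MvPowerSeries.subst_mul hfg, subst_def] at key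
  rwa [MvPowerSeries.subst_comp_subst_apply ((HasSubst.X 0).add (HasSubst.X 1)).const hfg,
    MvPowerSeries.subst_comp_subst_apply (HasSubst.X 0).const hfg,
    MvPowerSeries.subst_comp_subst_apply (HasSubst.X 1).const hfg, MvPowerSeries.subst_add hfg,
    MvPowerSeries.subst_X hfg, MvPowerSeries.subst_X hfg] at key

theorem exp_subst_nsmul {f : A⟦X⟧} (hf : constantCoeff f = 0) (k : ℕ) :
    (exp A).subst (k • f) = (exp A).subst f ^ k := by
  induction k with
  | zero => simp [subst_zero_eq_C_constantCoeff]
  | succ k ih => rw [succ_nsmul, exp_subst_add (by simp [hf]) hf, ih, pow_succ]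

end Exp

end PowerSeries

section Padic

variable {p : ℕ} [Fact p.Prime]

theorem Padic.norm_coeff_exp_mul_pow_le {k : ℕ} (hk : k ≠ 0) :
    ‖coeff k (exp ℚ_[p])‖ * ‖(p : ℚ_[p])‖ ^ k ≤ ‖(p : ℚ_[p])‖ := by
  have hv := padicValNat_factorial_lt_of_ne_zero p hk
  have hp : (1 : ℝ) ≤ p := by exact_mod_cast (Fact.out : p.Prime).one_le
  rw [coeff_exp, map_div₀, map_one, map_natCast, norm_div, norm_one,
    Padic.norm_eq_zpow_neg_valuation (by exact_mod_cast k.factorial_ne_zero),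
    Padic.valuation_natCast, Padic.norm_p, ← zpow_neg_one, ← zpow_natCast, ← zpow_mul,
    one_div, ← zpow_neg, ← zpow_add₀ (by positivity)]
  exact zpow_le_zpow_right₀ hp (by omega)

theorem PadicInt.norm_le_norm_p_of_toZMod_eq_zero {x : ℤ_[p]} (hx : PadicInt.toZMod x = 0) :
    ‖x‖ ≤ ‖(p : ℤ_[p])‖ := by
  have hmem : x ∈ Ideal.span {(p : ℤ_[p]) ^ 1} := by
    rwa [pow_one, ← PadicInt.maximalIdeal_eq_span_p, ← PadicInt.ker_toZMod, RingHom.mem_ker]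
  rw [PadicInt.norm_p, ← zpow_neg_one]
  exact_mod_cast (PadicInt.norm_le_pow_iff_mem_span_pow x 1).mpr hmem

theorem Padic.norm_coeff_pow_sub_coeff_expand_le (hp : p ≠ 0) {T : ℚ_[p]⟦X⟧}
    (hT : ∀ i, ‖coeff i T‖ ≤ 1) (n : ℕ) :
    ‖coeff n (T ^ p) - coeff n (expand p hp T)‖ ≤ ‖(p : ℚ_[p])‖ := by
  obtain ⟨Q, hQ⟩ : ∃ Q : ℤ_[p]⟦X⟧, map PadicInt.Coe.ringHom Q = T :=
    ⟨PowerSeries.mk fun i => (⟨coeff i T, hT i⟩ : ℤ_[p]), by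
      ext i; exact congrArg PadicInt.Coe.ringHom (coeff_mk (R := ℤ_[p]) i _)⟩
  have hfrob : map PadicInt.toZMod (Q ^ p) = map PadicInt.toZMod (expand p hp Q) := by
    rw [map_pow, map_expand]
    refine (MvPowerSeries.map_frobenius_expand p hp).symm.trans ?_
    rw [ZMod.frobenius_zmod]
    rfl
  have hd : PadicInt.toZMod (coeff n (Q ^ p) - coeff n (expand p hp Q)) = 0 := by
    rw [map_sub, sub_eq_zero, ← coeff_map, ← coeff_map, hfrob]
  rw [← hQ, ← map_pow, ← map_expand, coeff_map, coeff_map, ← map_sub]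
  exact PadicInt.norm_le_norm_p_of_toZMod_eq_zero hd

theorem Padic.norm_coeff_exp_subst_sub_one_le {h : ℚ_[p]⟦X⟧} (h0 : constantCoeff h = 0)
    (hh : ∀ j, ‖coeff j h‖ ≤ ‖(p : ℚ_[p])‖) (j : ℕ) :
    ‖coeff j ((exp ℚ_[p]).subst h - 1)‖ ≤ ‖(p : ℚ_[p])‖ := by
  rw [map_sub, coeff_subst_eq_sum _ h0, sum_range_succ', coeff_zero_eq_constantCoeff_apply,
    constantCoeff_exp, pow_zero, one_mul, add_sub_cancel_right]
  refine IsUltrametricDist.norm_sum_le_of_forall_le_of_nonneg (norm_nonneg _) fun k _ => ?_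
  calc ‖coeff (k + 1) (exp ℚ_[p]) * coeff j (h ^ (k + 1))‖
      ≤ ‖coeff (k + 1) (exp ℚ_[p])‖ * ‖(p : ℚ_[p])‖ ^ (k + 1) := by
        rw [norm_mul]
        exact mul_le_mul_of_nonneg_left (norm_coeff_pow_le (fun i _ => hh i) _ le_rfl)
          (norm_nonneg _)
    _ ≤ ‖(p : ℚ_[p])‖ := Padic.norm_coeff_exp_mul_pow_le k.succ_ne_zero

theorem Padic.norm_coeff_le_one_of_forall_lt_of_expand_eq_pow_mul (hp : p ≠ 0)
    {E H : ℚ_[p]⟦X⟧} (hE : constantCoeff E = 1) (hH : ∀ j, ‖coeff j (H - 1)‖ ≤ ‖(p : ℚ_[p])‖)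
    (hEH : expand p hp E = E ^ p * H) {n : ℕ} (hn : 0 < n) (ih : ∀ m < n, ‖coeff m E‖ ≤ 1) :
    ‖coeff n E‖ ≤ 1 := by
  set T : ℚ_[p]⟦X⟧ := ↑(trunc n E)
  have hT : ∀ i, ‖coeff i T‖ ≤ 1 := by
    intro i
    rw [Polynomial.coeff_coe, coeff_trunc]
    split_ifs with hi
    · exact ih i hi
    · simp
  have hexpand : coeff n (expand p hp T) = coeff n (expand p hp E) := by
    rw [coeff_expand, coeff_expand, Polynomial.coeff_coe, coeff_trunc,
      if_pos (Nat.div_lt_self hn (Fact.out : p.Prime).one_lt)]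
  obtain ⟨G, hG⟩ : X ∣ H - 1 := by
    rw [X_dvd_iff, map_sub, map_one, sub_eq_zero]
    simpa [hE] using (congrArg constantCoeff hEH).symm
  have hcorr : ‖coeff n (E ^ p * (H - 1))‖ ≤ ‖(p : ℚ_[p])‖ := by
    obtain ⟨m, rfl⟩ := Nat.exists_eq_add_of_lt hn
    rw [hG, mul_left_comm, coeff_succ_X_mul, ← one_mul ‖(p : ℚ_[p])‖, ← one_pow p]
    refine norm_coeff_mul_le_s9 (fun i _ => norm_coeff_pow_le (fun j hj => ih j (by omega)) p le_rfl)
      fun j _ => ?_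
    simpa [hG, coeff_succ_X_mul] using hH (j + 1)
  have key : (p : ℚ_[p]) * coeff n E =
      (coeff n (expand p hp T) - coeff n (T ^ p)) - coeff n (E ^ p * (H - 1)) := by
    rw [hexpand, hEH, mul_sub, mul_one, map_sub, coeff_pow_eq_coeff_trunc_pow_add hE hn.ne' p]
    ring
  have hpn : ‖(p : ℚ_[p]) * coeff n E‖ ≤ ‖(p : ℚ_[p])‖ := by
    rw [key, sub_eq_add_neg]
    refine (IsUltrametricDist.norm_add_le_max _ _).trans (max_le ?_ (by rwa [norm_neg]))
    rw [norm_sub_rev]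
    exact Padic.norm_coeff_pow_sub_coeff_expand_le hp hT n
  rw [norm_mul] at hpn
  exact (mul_le_iff_le_one_right (norm_pos_iff.mpr (by exact_mod_cast hp))).mp hpn

theorem Padic.norm_coeff_le_one_of_expand_eq_pow_mul (hp : p ≠ 0) {E H : ℚ_[p]⟦X⟧}
    (hE : constantCoeff E = 1) (hH : ∀ j, ‖coeff j (H - 1)‖ ≤ ‖(p : ℚ_[p])‖)
    (hEH : expand p hp E = E ^ p * H) (n : ℕ) : ‖coeff n E‖ ≤ 1 := by
  induction n using Nat.strong_induction_on with
  | _ n ih =>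
  rcases Nat.eq_zero_or_pos n with rfl | hn
  · simp [hE]
  · exact Padic.norm_coeff_le_one_of_forall_lt_of_expand_eq_pow_mul hp hE hH hEH hn ih

end Padic

/-- If `f ∈ z·ℚ_p[[z]]` satisfies `f(z^p) - p·f(z) ∈ p·z·ℤ_p[[z]]`, then
`exp(f)` has `p`-integral coefficients. Here `fp` denotes `f(z^p)` and `E` denotes
the formal exponential `exp(f) = Σ_k f^k / k!`. -/
theorem exp_integral_of_dwork_congruence (p : ℕ) [Fact p.Prime]
    (f : PowerSeries ℚ_[p]) (hf0 : PowerSeries.constantCoeff f = 0)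
    (fp : PowerSeries ℚ_[p])
    (hfp : ∀ n : ℕ, PowerSeries.coeff n fp =
      if p ∣ n then PowerSeries.coeff (n / p) f else 0)
    (hcong : PowerSeries.constantCoeff (fp - (p : ℚ_[p]) • f) = 0 ∧
      ∀ n : ℕ, ‖PowerSeries.coeff n (fp - (p : ℚ_[p]) • f)‖ ≤ ‖(p : ℚ_[p])‖)
    (E : PowerSeries ℚ_[p])
    (hE : ∀ n : ℕ, PowerSeries.coeff n E =
      ∑ k ∈ Finset.range (n + 1),
        ((k.factorial : ℚ_[p]))⁻¹ * PowerSeries.coeff n (f ^ k)) :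
    ∀ n : ℕ, ‖PowerSeries.coeff n E‖ ≤ 1 := by
  have hp : p ≠ 0 := (Fact.out : p.Prime).ne_zero
  have hfp' : fp = expand p hp f := by ext n; rw [hfp, coeff_expand]
  have hE' : E = (exp ℚ_[p]).subst f := by
    ext n; simp [hE, coeff_subst_eq_sum _ hf0, coeff_exp]
  set h := fp - (p : ℚ_[p]) • f
  have hsplit : fp = p • f + h := by simp [h, Nat.cast_smul_eq_nsmul]
  have hEH : expand p hp E = E ^ p * (exp ℚ_[p]).subst h := by
    have hexp : expand p hp ((exp ℚ_[p]).subst f) = (exp ℚ_[p]).subst (expand p hp f) :=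
      expand_subst p hp (HasSubst.of_constantCoeff_zero' hf0) _
    rw [hE', hexp, ← hfp', hsplit, exp_subst_add (by simp [hf0]) hcong.1, exp_subst_nsmul hf0]
  have hE1 : constantCoeff E = 1 := by
    rw [← coeff_zero_eq_constantCoeff_apply, hE]
    simp
  exact Padic.norm_coeff_le_one_of_expand_eq_pow_mul hp hE1
    (Padic.norm_coeff_exp_subst_sub_one_le hcong.1 hcong.2) hEH
end

section
/- If f - f' ∈ p·ℤ_p[[z]] for formal power series f, f' over ℚ_p with zero constant term, and exp(f) ∈ ℤ_p[[z]], then exp(f') ∈ ℤ_p[[z]]. -/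
/-!
Modulo `X ^ (N + 1)` every power series with zero constant term is nilpotent, and the
exponential of commuting nilpotents is multiplicative; hence `exp f' = exp f * exp (f' - f)`
coefficientwise. The factor `exp (f' - f)` is integral because `‖pᵏ / k!‖ ≤ 1`, and a product
of integral series is integral by the ultrametric inequality.
-/

open PowerSeries Finset IsUltrametricDist

lemma PowerSeries.coeff_pow_eq_zero_of_lt {R : Type*} [CommSemiring R] {f : R⟦X⟧}
    (hf : constantCoeff f = 0) {m k : ℕ} (hmk : m < k) : coeff m (f ^ k) = 0 :=
  X_pow_dvd_iff.mp (pow_dvd_pow_of_dvd (X_dvd_iff.mpr hf) k) m hmk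

section ExpTrunc

variable {R : Type*} [CommRing R] [Algebra ℚ R]

noncomputable def PowerSeries.expTrunc (N : ℕ) (f : R⟦X⟧) : R⟦X⟧ :=
  ∑ k ∈ range (N + 1), (k.factorial : ℚ)⁻¹ • f ^ k

lemma PowerSeries.coeff_expTrunc_of_le {f : R⟦X⟧} (hf : constantCoeff f = 0) {m N : ℕ}
    (hmN : m ≤ N) : coeff m (expTrunc N f) = coeff m (expTrunc m f) := by
  simp only [expTrunc, map_sum, coeff_smul]
  refine (sum_subset (range_subset_range.mpr (by omega)) fun k _ hkm => ?_).symm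
  rw [coeff_pow_eq_zero_of_lt hf (by simpa using hkm), smul_zero]

lemma PowerSeries.X_pow_dvd_expTrunc_add_sub_mul {f g : R⟦X⟧} (hf : constantCoeff f = 0)
    (hg : constantCoeff g = 0) (N : ℕ) :
    X ^ (N + 1) ∣ expTrunc N (f + g) - expTrunc N f * expTrunc N g := by
  set π := Ideal.Quotient.mk (Ideal.span {(X : R⟦X⟧) ^ (N + 1)})
  have hnil : ∀ φ : R⟦X⟧, constantCoeff φ = 0 → π φ ^ (N + 1) = 0 := fun φ hφ => by
    rw [← map_pow, Ideal.Quotient.eq_zero_iff_mem, Ideal.mem_span_singleton]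
    exact pow_dvd_pow_of_dvd (X_dvd_iff.mpr hφ) _
  have hexp : ∀ φ : R⟦X⟧, constantCoeff φ = 0 →
      IsNilpotent.exp (π φ) = π (expTrunc N φ) := fun φ hφ => by
    simp only [IsNilpotent.exp_eq_sum (hnil φ hφ), expTrunc, map_sum, map_rat_smul, map_pow]
  rw [← Ideal.mem_span_singleton, ← Ideal.Quotient.eq_zero_iff_mem, map_sub, map_mul,
    ← hexp f hf, ← hexp g hg, ← hexp (f + g) (by rw [map_add, hf, hg, add_zero]), map_add,
    sub_eq_zero]
  exact IsNilpotent.exp_add_of_commute (Commute.all _ _) ⟨_, hnil f hf⟩ ⟨_, hnil g hg⟩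

lemma PowerSeries.coeff_expTrunc_add {f g : R⟦X⟧} (hf : constantCoeff f = 0)
    (hg : constantCoeff g = 0) (N : ℕ) :
    coeff N (expTrunc N (f + g)) =
      ∑ x ∈ antidiagonal N, coeff x.1 (expTrunc x.1 f) * coeff x.2 (expTrunc x.2 g) := by
  have hdiff := X_pow_dvd_iff.mp (X_pow_dvd_expTrunc_add_sub_mul hf hg N) N N.lt_succ_self
  rw [map_sub, sub_eq_zero] at hdiff
  rw [hdiff, coeff_mul]
  refine sum_congr rfl fun x hx => ?_
  have hx : x.1 + x.2 = N := mem_antidiagonal.mp hx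
  rw [coeff_expTrunc_of_le hf (by omega), coeff_expTrunc_of_le hg (by omega)]

end ExpTrunc

lemma PowerSeries.coeff_expTrunc {K : Type*} [Field K] [CharZero K] (f : K⟦X⟧) (N m : ℕ) :
    coeff m (expTrunc N f) =
      ∑ k ∈ range (N + 1), ((k.factorial : K))⁻¹ * coeff m (f ^ k) := by
  simp [expTrunc, map_sum, Rat.smul_def]

lemma PowerSeries.norm_coeff_pow_le_s11 {R : Type*} [NormedCommRing R] [NormOneClass R]
    [IsUltrametricDist R] {g : R⟦X⟧} {r : ℝ} (hg : ∀ m, ‖coeff m g‖ ≤ r) (b m : ℕ) :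
    ‖coeff m (g ^ b)‖ ≤ r ^ b := by
  have hr : 0 ≤ r := (norm_nonneg _).trans (hg 0)
  induction b generalizing m with
  | zero => rw [pow_zero, coeff_one]; split <;> simp
  | succ b ih =>
    rw [pow_succ, coeff_mul, pow_succ]
    refine norm_sum_le_of_forall_le_of_nonneg (by positivity) fun x _ => ?_
    exact (norm_mul_le _ _).trans (mul_le_mul (ih x.1) (hg x.2) (norm_nonneg _) (by positivity))

lemma Padic.norm_p_pow_div_factorial_le_one (p : ℕ) [Fact p.Prime] (k : ℕ) :
    ‖(p : ℚ_[p]) ^ k / k.factorial‖ ≤ 1 := by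
  have hp : (1 : ℝ) ≤ p := by exact_mod_cast (Fact.out : p.Prime).one_le
  rw [norm_div, norm_p_pow, norm_eq_zpow_neg_valuation (by exact_mod_cast k.factorial_ne_zero),
    valuation_natCast, ← zpow_sub₀ (by positivity)]
  refine zpow_le_one_of_nonpos₀ hp ?_
  have := padicValNat_factorial_le (p := p) k
  omega

lemma Padic.norm_coeff_expTrunc_le_one {p : ℕ} [Fact p.Prime] {g : ℚ_[p]⟦X⟧}
    (hg : ∀ m, ‖coeff m g‖ ≤ ‖(p : ℚ_[p])‖) (N m : ℕ) :
    ‖coeff m (expTrunc N g)‖ ≤ 1 := by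
  rw [coeff_expTrunc]
  refine norm_sum_le_of_forall_le_of_nonneg zero_le_one fun k _ => ?_
  calc ‖((k.factorial : ℚ_[p]))⁻¹ * coeff m (g ^ k)‖
      ≤ ‖((k.factorial : ℚ_[p]))⁻¹‖ * ‖(p : ℚ_[p])‖ ^ k := by
        rw [norm_mul]; gcongr; exact norm_coeff_pow_le_s11 hg k m
    _ = ‖(p : ℚ_[p]) ^ k / k.factorial‖ := by
        rw [norm_div, norm_pow, norm_inv, div_eq_mul_inv, mul_comm]
    _ ≤ 1 := norm_p_pow_div_factorial_le_one p k

/-- If `f - f' ∈ p·ℤ_p[[z]]` for power series with zero constant term and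
`exp(f) ∈ ℤ_p[[z]]`, then `exp(f') ∈ ℤ_p[[z]]`. Here `E = exp(f)` and `E' = exp(f')`
are the formal exponentials, described coefficientwise. -/
theorem exp_integral_of_congruent (p : ℕ) [Fact p.Prime]
    (f f' : PowerSeries ℚ_[p])
    (hf0 : PowerSeries.constantCoeff f = 0)
    (hf'0 : PowerSeries.constantCoeff f' = 0)
    (hsub : ∀ n : ℕ, ‖PowerSeries.coeff n (f - f')‖ ≤ ‖(p : ℚ_[p])‖)
    (E E' : PowerSeries ℚ_[p])
    (hE : ∀ n : ℕ, PowerSeries.coeff n E =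
      ∑ k ∈ Finset.range (n + 1),
        ((k.factorial : ℚ_[p]))⁻¹ * PowerSeries.coeff n (f ^ k))
    (hE' : ∀ n : ℕ, PowerSeries.coeff n E' =
      ∑ k ∈ Finset.range (n + 1),
        ((k.factorial : ℚ_[p]))⁻¹ * PowerSeries.coeff n (f' ^ k))
    (hEint : ∀ n : ℕ, ‖PowerSeries.coeff n E‖ ≤ 1) :
    ∀ n : ℕ, ‖PowerSeries.coeff n E'‖ ≤ 1 := by
  intro n
  have hg0 : constantCoeff (f' - f) = 0 := by rw [map_sub, hf'0, hf0, sub_zero]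
  have hg : ∀ m, ‖coeff m (f' - f)‖ ≤ ‖(p : ℚ_[p])‖ := fun m => by
    rw [← norm_neg, ← map_neg, neg_sub]
    exact hsub m
  rw [hE', ← coeff_expTrunc, ← add_sub_cancel f f', coeff_expTrunc_add hf0 hg0]
  refine norm_sum_le_of_forall_le_of_nonneg zero_le_one fun x _ => ?_
  rw [norm_mul, coeff_expTrunc, ← hE]
  exact mul_le_one₀ (hEint _) (norm_nonneg _) (Padic.norm_coeff_expTrunc_le_one hg _ _)
end

section
/- For the Gauss hypergeometric function with c = 1, Euler's identity holds as an identity of formal power series: ₂F₁(a, b; 1 | z) = (1-z)^{1-a-b} · ₂F₁(1-a, 1-b; 1 | z), where (1-z)^{1-a-b} is the formal binomial series. -/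
open PowerSeries

/-- The Gauss hypergeometric series `₂F₁(a,b;1|z) = Σ_k (a)_k (b)_k / (k!)² z^k`. -/
noncomputable def gaussHyp (a b : ℚ) : PowerSeries ℚ :=
  PowerSeries.mk fun k =>
    (ascPochhammer ℚ k).eval a * (ascPochhammer ℚ k).eval b / ((k.factorial : ℚ)) ^ 2

/-- The formal binomial series `(1-z)^{-s} = Σ_k (s)_k / k! z^k`. -/
noncomputable def binomSeries (s : ℚ) : PowerSeries ℚ :=
  PowerSeries.mk fun k => (ascPochhammer ℚ k).eval s / (k.factorial : ℚ)

/-!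
Both sides have constant term `1`, and their coefficients obey the same first-order
recurrence `(n+1)² c(n+1) = (n+a)(n+b) c(n)`, so they agree. For `₂F₁(a,b;1|z)` the
recurrence is the ratio of consecutive terms. For the Cauchy product with terms
`B(i,j) = [zⁱ](1-z)^{1-a-b} · [zʲ]₂F₁(1-a,1-b;1|z)` it follows from the
Wilf–Zeilberger pair with certificate `G(i,j) = j² B(i,j)`: on the antidiagonal `i + j = n`,
`(n+1)² B(i+1,j) - (n+a)(n+b) B(i,j) = G(i+1,j) - G(i,j+1)`,
and the right-hand side telescopes along the antidiagonal.
-/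

open Finset

theorem Finset.Nat.sum_antidiagonal_sub_telescope {M : Type*} [AddCommGroup M]
    (G : ℕ → ℕ → M) (n : ℕ) :
    ∑ p ∈ antidiagonal n, (G (p.1 + 1) p.2 - G p.1 (p.2 + 1)) = G (n + 1) 0 - G 0 (n + 1) := by
  have hleft := Nat.sum_antidiagonal_succ (n := n) (f := fun p => G p.1 p.2)
  have hright := Nat.sum_antidiagonal_succ' (n := n) (f := fun p => G p.1 p.2)
  rw [sum_sub_distrib, eq_sub_of_add_eq' hleft.symm, eq_sub_of_add_eq' hright.symm]
  abel

theorem PowerSeries.eq_of_coeff_succ_recurrence {R : Type*} [Semiring R] [IsLeftCancelMulZero R]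
    {f g : R⟦X⟧} (p q : ℕ → R) (hp : ∀ n, p n ≠ 0)
    (hf : ∀ n, p n * coeff (n + 1) f = q n * coeff n f)
    (hg : ∀ n, p n * coeff (n + 1) g = q n * coeff n g)
    (h0 : coeff 0 f = coeff 0 g) : f = g := by
  ext n
  induction n with
  | zero => exact h0
  | succ n ih => exact mul_left_cancel₀ (hp n) (by rw [hf, hg, ih])

theorem coeff_zero_gaussHyp (a b : ℚ) : coeff 0 (gaussHyp a b) = 1 := by
  simp [gaussHyp]

theorem coeff_zero_binomSeries (s : ℚ) : coeff 0 (binomSeries s) = 1 := by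
  simp [binomSeries]

theorem coeff_succ_gaussHyp (a b : ℚ) (n : ℕ) :
    ((n : ℚ) + 1) ^ 2 * coeff (n + 1) (gaussHyp a b)
      = (n + a) * (n + b) * coeff n (gaussHyp a b) := by
  have hfact : (n.factorial : ℚ) ≠ 0 := by positivity
  simp only [gaussHyp, coeff_mk, ascPochhammer_succ_eval, Nat.factorial_succ, Nat.cast_mul,
    Nat.cast_succ]
  field_simp
  ring

theorem coeff_succ_binomSeries (s : ℚ) (n : ℕ) :
    ((n : ℚ) + 1) * coeff (n + 1) (binomSeries s) = (s + n) * coeff n (binomSeries s) := by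
  have hfact : (n.factorial : ℚ) ≠ 0 := by positivity
  simp only [binomSeries, coeff_mk, ascPochhammer_succ_eval, Nat.factorial_succ, Nat.cast_mul,
    Nat.cast_succ]
  field_simp

section EulerProduct

variable (a b : ℚ)

noncomputable def eulerTerm (i j : ℕ) : ℚ :=
  coeff i (binomSeries (a + b - 1)) * coeff j (gaussHyp (1 - a) (1 - b))

theorem eulerTerm_wz (i j : ℕ) :
    ((i : ℚ) + j + 1) ^ 2 * eulerTerm a b (i + 1) j
        - ((i : ℚ) + j + a) * ((i : ℚ) + j + b) * eulerTerm a b i j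
      = (j : ℚ) ^ 2 * eulerTerm a b (i + 1) j - ((j : ℚ) + 1) ^ 2 * eulerTerm a b i (j + 1) := by
  have hP := coeff_succ_binomSeries (a + b - 1) i
  have hU := coeff_succ_gaussHyp (1 - a) (1 - b) j
  unfold eulerTerm
  linear_combination ((i : ℚ) + 2 * j + 1) * coeff j (gaussHyp (1 - a) (1 - b)) * hP
    + coeff i (binomSeries (a + b - 1)) * hU

theorem coeff_succ_binomSeries_mul_gaussHyp (n : ℕ) :
    ((n : ℚ) + 1) ^ 2 * coeff (n + 1) (binomSeries (a + b - 1) * gaussHyp (1 - a) (1 - b))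
      = (n + a) * (n + b) * coeff n (binomSeries (a + b - 1) * gaussHyp (1 - a) (1 - b)) := by
  set G : ℕ → ℕ → ℚ := fun i j => (j : ℚ) ^ 2 * eulerTerm a b i j
  have hcoeff (m : ℕ) : coeff m (binomSeries (a + b - 1) * gaussHyp (1 - a) (1 - b))
      = ∑ p ∈ antidiagonal m, eulerTerm a b p.1 p.2 := coeff_mul _ _ _
  have hsplit := Nat.sum_antidiagonal_succ (n := n) (f := fun p => eulerTerm a b p.1 p.2)
  have htelescope : ∑ p ∈ antidiagonal n, (((n : ℚ) + 1) ^ 2 * eulerTerm a b (p.1 + 1) p.2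
        - (n + a) * (n + b) * eulerTerm a b p.1 p.2)
      = ∑ p ∈ antidiagonal n, (G (p.1 + 1) p.2 - G p.1 (p.2 + 1)) := by
    refine sum_congr rfl fun p hp => ?_
    obtain rfl := mem_antidiagonal.mp hp
    simp only [G]
    push_cast
    exact eulerTerm_wz a b p.1 p.2
  rw [Finset.Nat.sum_antidiagonal_sub_telescope, sum_sub_distrib, ← mul_sum,
    ← mul_sum] at htelescope
  rw [hcoeff, hcoeff, hsplit]
  simp only [G] at htelescope
  push_cast at htelescope
  linear_combination htelescope

end EulerProduct

/-- Euler's identity for the Gauss hypergeometric function with `c = 1`, as an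
identity of formal power series:
`₂F₁(a,b;1|z) = (1-z)^{1-a-b} · ₂F₁(1-a,1-b;1|z)`, where
`(1-z)^{1-a-b} = (1-z)^{-(a+b-1)}` is the formal binomial series. -/
theorem euler_identity (a b : ℚ) :
    gaussHyp a b = binomSeries (a + b - 1) * gaussHyp (1 - a) (1 - b) := by
  refine eq_of_coeff_succ_recurrence (fun n => ((n : ℚ) + 1) ^ 2) (fun n => (n + a) * (n + b))
    (fun n => by positivity) (coeff_succ_gaussHyp a b)
    (coeff_succ_binomSeries_mul_gaussHyp a b) ?_
  simp [coeff_mul, coeff_zero_gaussHyp, coeff_zero_binomSeries]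
end

section
/- Let s ≥ 2 be an integer with Euler totient m = φ(s), and let r₁,...,r_m be the integers in [1,s] coprime to s. Set A_s(k) = (r₁/s)_k ··· (r_m/s)_k / (k!)^m where (x)_k is the Pochhammer symbol. Then with N_s = s^m · ∏_{p | s} p^{m/(p-1)}, the number N_s^k · A_s(k) is an integer for every k ≥ 0. -/
/-!
Clearing denominators, `s^(m k) · ∏ᵣ (r/s)_k = ∏ᵣ ∏_{j<k} (r + j s)`, so it suffices that `(k!)^m`
divides `Q^k · ∏ᵣ ∏_{j<k} (r + j s)` with `Q = ∏_{p ∣ s} p^(m/(p-1))`; this is checked one prime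
`q` at a time. If `q ∤ s`, each of the `m` rows `∏_{j<k} (r + j s)` is already divisible by the
`q`-part of `k!`. If `q ∣ s`, Legendre's bound `(q - 1) v_q(k!) ≤ k` and `(q - 1) ∣ m` give
`m v_q(k!) ≤ k m/(q - 1) = v_q(Q^k)`.
-/

open Finset
open scoped Nat

theorem card_filter_coprime_Icc (s : ℕ) : #{r ∈ Icc 1 s | r.Coprime s} = φ s := by
  simpa only [Nat.coprime_comm, add_comm 1, Finset.Ico_add_one_right_eq_Icc]
    using Nat.filter_coprime_Ico_eq_totient s 1

theorem ascPochhammer_eval_div_mul_pow {K : Type*} [Field K] (x : K) {y : K} (hy : y ≠ 0) (k : ℕ) :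
    (ascPochhammer K k).eval (x / y) * y ^ k = ∏ j ∈ range k, (x + j * y) := by
  induction k with
  | zero => simp
  | succ k ih =>
    rw [ascPochhammer_succ_eval, prod_range_succ, ← ih]
    field_simp
    ring

theorem Nat.sub_one_dvd_totient {p n : ℕ} (hp : p.Prime) (h : p ∣ n) : p - 1 ∣ φ n :=
  totient_prime hp ▸ totient_dvd_of_dvd h

theorem totient_mul_factorization_factorial_le {p s : ℕ} (hp : p.Prime) (hps : p ∣ s) (k : ℕ) :
    φ s * (k !).factorization p ≤ k * (φ s / (p - 1)) := by
  obtain ⟨t, ht⟩ := Nat.sub_one_dvd_totient hp hps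
  rw [ht, Nat.mul_div_cancel_left t (Nat.sub_pos_of_lt hp.one_lt)]
  calc (p - 1) * t * (k !).factorization p = t * ((p - 1) * (k !).factorization p) := by ring
    _ ≤ t * k := Nat.mul_le_mul_left t (Nat.sub_one_mul_factorization_factorial hp ▸ Nat.sub_le _ _)
    _ = k * t := mul_comm t k

/-- Modulo `d`, `r ≡ t s` for some `t`, so the product is `s^k t (t+1) ⋯ (t+k-1)`, a multiple
of `k!`. -/
theorem dvd_prod_range_add_mul {d s k : ℕ} (hd : d ∣ k !) (hds : d.Coprime s) (r : ℕ) :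
    d ∣ ∏ j ∈ range k, (r + j * s) := by
  have : NeZero d := ⟨ne_zero_of_dvd_ne_zero (Nat.factorial_ne_zero k) hd⟩
  have hs : IsUnit (s : ZMod d) := (ZMod.isUnit_iff_coprime s d).2 hds.symm
  set t := ((r : ZMod d) * (s : ZMod d)⁻¹).val
  have ht : (r : ZMod d) = t * s := by simp [t, ZMod.inv_mul_of_unit _ hs, mul_assoc]
  have hfac : ((t.ascFactorial k : ℕ) : ZMod d) = 0 :=
    (ZMod.natCast_eq_zero_iff _ _).2 (hd.trans (Nat.factorial_dvd_ascFactorial t k))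
  rw [← ZMod.natCast_eq_zero_iff]
  calc ((∏ j ∈ range k, (r + j * s) : ℕ) : ZMod d)
      = (t.ascFactorial k : ℕ) * (s : ZMod d) ^ #(range k) := by
        push_cast [Nat.ascFactorial_eq_prod_range, ht, prod_mul_pow_card, add_mul]
        rfl
    _ = 0 := by rw [hfac, zero_mul]

theorem factorization_prod_pow_primeFactors {n q : ℕ} (e : ℕ → ℕ) (hq : q ∈ n.primeFactors) :
    (∏ p ∈ n.primeFactors, p ^ e p).factorization q = e q := by
  rw [Nat.factorization_prod fun p hp => pow_ne_zero _ (Nat.prime_of_mem_primeFactors hp).ne_zero,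
    Finsupp.finsetSum_apply, sum_eq_single_of_mem q hq]
  · simp [(Nat.prime_of_mem_primeFactors hq).factorization_self]
  · intro p hp hpq
    simp [(Nat.prime_of_mem_primeFactors hp).factorization, hpq]

theorem factorial_pow_totient_dvd (s k : ℕ) :
    k ! ^ φ s ∣ (∏ p ∈ s.primeFactors, p ^ (φ s / (p - 1))) ^ k *
      ∏ r ∈ Icc 1 s with r.Coprime s, ∏ j ∈ range k, (r + j * s) := by
  set Q := ∏ p ∈ s.primeFactors, p ^ (φ s / (p - 1))
  set P := ∏ r ∈ Icc 1 s with r.Coprime s, ∏ j ∈ range k, (r + j * s)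
  have hQ : Q ≠ 0 :=
    prod_ne_zero_iff.2 fun p hp => pow_ne_zero _ (Nat.prime_of_mem_primeFactors hp).ne_zero
  have hP : P ≠ 0 := prod_ne_zero_iff.2 fun r hr => prod_ne_zero_iff.2 fun j _ => by
    have hr_pos := (mem_Icc.1 (mem_filter.1 hr).1).1
    omega
  refine (Nat.factorization_prime_le_iff_dvd (by positivity) (by positivity)).1 fun q hq => ?_
  rw [Nat.factorization_pow, Nat.factorization_mul (pow_ne_zero k hQ) hP, Nat.factorization_pow]
  simp only [Finsupp.smul_apply, Finsupp.add_apply, smul_eq_mul]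
  by_cases hqs : q ∣ s
  · rcases eq_or_ne s 0 with rfl | hs
    · simp
    calc φ s * (k !).factorization q ≤ k * (φ s / (q - 1)) :=
          totient_mul_factorization_factorial_le hq hqs k
      _ = k * Q.factorization q := by
          rw [factorization_prod_pow_primeFactors _ (Nat.mem_primeFactors.2 ⟨hq, hqs, hs⟩)]
      _ ≤ _ := Nat.le_add_right _ _
  · have hd : (q ^ (k !).factorization q) ^ φ s ∣ P := by
      rw [← card_filter_coprime_Icc, ← prod_const]
      exact prod_dvd_prod_of_dvd _ _ fun r _ => dvd_prod_range_add_mul (Nat.ordProj_dvd _ q)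
        (Nat.Coprime.pow_left _ ((Nat.Prime.coprime_iff_not_dvd hq).2 hqs)) r
    calc φ s * (k !).factorization q = ((q ^ (k !).factorization q) ^ φ s).factorization q := by
          simp [hq.factorization_self, mul_comm]
      _ ≤ P.factorization q :=
          (Nat.factorization_le_iff_dvd (pow_ne_zero _ (pow_ne_zero _ hq.ne_zero)) hP).2 hd q
      _ ≤ _ := Nat.le_add_left _ _

theorem zudilin_integrality_general (s : ℕ) (k : ℕ) :
    ∃ z : ℤ,
      ((s ^ s.totient * ∏ p ∈ s.primeFactors, p ^ (s.totient / (p - 1)) : ℕ) : ℚ) ^ k *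
        ((∏ r ∈ (Finset.Icc 1 s).filter (fun r => Nat.Coprime r s),
            (ascPochhammer ℚ k).eval ((r : ℚ) / (s : ℚ))) /
          ((k.factorial : ℚ)) ^ s.totient) = (z : ℚ) := by
  obtain ⟨c, hc⟩ := factorial_pow_totient_dvd s k
  refine ⟨c, ?_⟩
  have hrows : (∏ r ∈ Icc 1 s with r.Coprime s, (ascPochhammer ℚ k).eval ((r : ℚ) / s)) *
      (s : ℚ) ^ (φ s * k) = ∏ r ∈ Icc 1 s with r.Coprime s, ∏ j ∈ range k, ((r : ℚ) + j * s) := by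
    rw [mul_comm (φ s), pow_mul, ← card_filter_coprime_Icc, ← prod_const, ← prod_mul_distrib]
    refine prod_congr rfl fun r hr => ascPochhammer_eval_div_mul_pow _ ?_ k
    have hr_Icc := mem_Icc.1 (mem_filter.1 hr).1
    exact_mod_cast (by omega : s ≠ 0)
  have hc_cast := congrArg (Nat.cast : ℕ → ℚ) hc
  push_cast at hc_cast ⊢
  rw [← hrows] at hc_cast
  field_simp
  linear_combination hc_cast

/-- Zudilin's Lemma 1: for `s ≥ 2`, `m = φ(s)`, `r₁,…,r_m` the integers in `[1,s]`
coprime to `s`, and `A_s(k) = ∏_i (r_i/s)_k / (k!)^m`, the number `N_s^k · A_s(k)` is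
an integer for all `k`, where `N_s = s^m · ∏_{p ∣ s} p^{m/(p-1)}`. -/
theorem zudilin_integrality (s : ℕ) (hs : 2 ≤ s) (k : ℕ) :
    ∃ z : ℤ,
      ((s ^ s.totient * ∏ p ∈ s.primeFactors, p ^ (s.totient / (p - 1)) : ℕ) : ℚ) ^ k *
        ((∏ r ∈ (Finset.Icc 1 s).filter (fun r => Nat.Coprime r s),
            (ascPochhammer ℚ k).eval ((r : ℚ) / (s : ℚ))) /
          ((k.factorial : ℚ)) ^ s.totient) = (z : ℚ) :=
  zudilin_integrality_general s k
end
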